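/- If a relation R ⊆ V × K × V is a well-founded delayed simulation witnessing v R[γ(v,w,✓)] w, then Duplicator has a winning strategy in the delayed simulation game from position (v,w) with initial obligation γ(Ω(v),Ω(w),✓). Conversely, the relation {(v,k,w) : Duplicator wins the delayed simulation game from (v,w) with obligation k} is a well-founded delayed simulation. Hence v ⊑_de w iff v ≤_de w. -/
import Mathlib


universe u

/-- A parity game: a directed graph with a total edge relation, a priority
function and an owner function (`true` = player even, `false` = player odd). -/
structure ParityGame (V : Type u) where
  edge : V → V → Prop
  total : ∀ v, ∃ w, edge v w
  prio : V → ℕ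
  owner : V → Bool

namespace ParityGame

variable {V : Type u}

/-- A (history-dependent) strategy: given the history of previously visited
vertices and the current vertex, choose a successor.  Only the values at
vertices owned by the given player matter. -/
abbrev Strategy (V : Type u) : Type u := List V → V → V

variable (G : ParityGame V)

/-- A strategy is valid for player `i` if it always proposes edges. -/
def ValidStrategy (i : Bool) (σ : Strategy V) : Prop :=
  ∀ h v, G.owner v = i → G.edge v (σ h v)

/-- A memoryless strategy only depends on the current vertex. -/
def Memoryless (σ : Strategy V) : Prop := ∀ h h' v, σ h v = σ h' v

/-- An (infinite) play is an infinite path in the game graph. -/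
def IsPlay (p : ℕ → V) : Prop := ∀ n, G.edge (p n) (p (n + 1))

/-- The history of a play before position `n`. -/
def hist (p : ℕ → V) (n : ℕ) : List V := List.ofFn (fun k : Fin n => p k)

/-- A play is consistent with a strategy `σ` of player `i` if at every vertex
owned by `i` the play follows `σ`. -/
def Consistent (i : Bool) (σ : Strategy V) (p : ℕ → V) : Prop :=
  ∀ n, G.owner (p n) = i → p (n + 1) = σ (hist p n) (p n)

/-- `G.ForcesVia i σ v U T`: every play from `v` consistent with `σ` reaches
`T`, all earlier vertices lying in `U`. -/
def ForcesVia (i : Bool) (σ : Strategy V) (v : V) (U T : Set V) : Prop :=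
  ∀ p : ℕ → V, G.IsPlay p → G.Consistent i σ p → p 0 = v →
    ∃ n, p n ∈ T ∧ ∀ j < n, p j ∈ U

/-- `v ⇒_{i,U} T`: player `i` has a memoryless strategy forcing every
consistent play from `v` to reach `T` while staying in `U` beforehand. -/
def Forces (i : Bool) (v : V) (U T : Set V) : Prop :=
  ∃ σ : Strategy V, G.ValidStrategy i σ ∧ Memoryless σ ∧ G.ForcesVia i σ v U T

/-- Every play from `v` consistent with `σ` stays in `U` forever. -/
def DivergesVia (i : Bool) (σ : Strategy V) (v : V) (U : Set V) : Prop :=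
  ∀ p : ℕ → V, G.IsPlay p → G.Consistent i σ p → p 0 = v → ∀ n, p n ∈ U

/-- `v ⇒^ω_{i,U}`: player `i` has a memoryless strategy keeping all
consistent plays from `v` forever inside `U`. -/
def Diverges (i : Bool) (v : V) (U : Set V) : Prop :=
  ∃ σ : Strategy V, G.ValidStrategy i σ ∧ Memoryless σ ∧ G.DivergesVia i σ v U

/-- Priority `k` occurs infinitely often on the play `p`. -/
def InfOften (p : ℕ → V) (k : ℕ) : Prop := ∀ N, ∃ n, N ≤ n ∧ G.prio (p n) = k

/-- Player even wins a play iff the least priority occurring infinitely often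
is even. -/
def EvenWinsPlay (p : ℕ → V) : Prop := Even (sInf {k | G.InfOften p k})

/-- Player `i` wins the play `p`. -/
def WinsPlay (i : Bool) (p : ℕ → V) : Prop := G.EvenWinsPlay p ↔ i = true

/-- `σ` is a winning strategy for player `i` from `v`. -/
def WinningFrom (i : Bool) (σ : Strategy V) (v : V) : Prop :=
  ∀ p : ℕ → V, G.IsPlay p → G.Consistent i σ p → p 0 = v → G.WinsPlay i p

end ParityGame

namespace ParityGame

variable {V : Type u} (G : ParityGame V)

/-- `w →_even S`: player even can ensure that the move from `w` ends in `S`: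
if `w` is even-owned some successor of `w` is in `S`; if `w` is odd-owned all
successors of `w` are in `S`. -/
def stepEven (w : V) (S : Set V) : Prop :=
  if G.owner w = true then ∃ w', G.edge w w' ∧ w' ∈ S
  else ∀ w', G.edge w w' → w' ∈ S

/-- Coinductive direct simulation relations. -/
def IsDirectSim (R : V → V → Prop) : Prop :=
  ∀ v w, R v w →
    G.prio v = G.prio w ∧
    (G.owner v = true → ∀ v', G.edge v v' → G.stepEven w {w' | R v' w'}) ∧
    (G.owner v = false → G.stepEven w {w' | ∃ v', G.edge v v' ∧ R v' w'})

/-- The direct simulation preorder `v ≤_d w`. -/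
def dsim (v w : V) : Prop := ∃ R, G.IsDirectSim R ∧ R v w

end ParityGame

namespace ParityGame

variable {V : Type u} (G : ParityGame V)

/-- In a round of the simulation game played from position `(v,w)`, Spoiler
controls the first component iff `v` is even-owned and the second component
iff `w` is odd-owned (he moves first, and Duplicator responds).
A Duplicator strategy takes the history of positions, the current position and
Spoiler's proposal and returns the next position; it is valid if it always
proposes edges and respects Spoiler's choices on the components Spoiler
controls. -/
def DupValid (τ : List (V × V) → V × V → V × V → V × V) : Prop :=
  ∀ h v w s, (G.owner v = true → G.edge v s.1) → (G.owner w = false → G.edge w s.2) →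
    G.edge v (τ h (v, w) s).1 ∧ G.edge w (τ h (v, w) s).2 ∧
    (G.owner v = true → (τ h (v, w) s).1 = s.1) ∧
    (G.owner w = false → (τ h (v, w) s).2 = s.2)

/-- A play of the simulation game consistent with Duplicator's strategy `τ`:
each next position results from `τ` applied to some (edge-valid) Spoiler
proposal. -/
def ConsistentDup (τ : List (V × V) → V × V → V × V → V × V)
    (p : ℕ → V × V) : Prop :=
  ∀ n, ∃ s : V × V,
    (G.owner (p n).1 = true → G.edge (p n).1 s.1) ∧
    (G.owner (p n).2 = false → G.edge (p n).2 s.2) ∧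
    p (n + 1) = τ (List.ofFn fun k : Fin n => p k) (p n) s

/-- Duplicator has a winning strategy from `(v,w)` in the direct simulation
game: all consistent plays have equal priorities in every position. -/
def DupWinsDirect (v w : V) : Prop :=
  ∃ τ : List (V × V) → V × V → V × V → V × V, G.DupValid τ ∧
    ∀ p : ℕ → V × V, p 0 = (v, w) → G.ConsistentDup τ p →
      ∀ n, G.prio (p n).1 = G.prio (p n).2

end ParityGame

namespace ParityGame

/-- The reward order `n ≼ m` on priorities. -/
def rord (n m : ℕ) : Prop :=
  (Even n ∧ Odd m) ∨ (Even n ∧ Even m ∧ n ≤ m) ∨ (Odd n ∧ Odd m ∧ m ≤ n)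

open Classical in
/-- The obligation update function `γ(n, m, k)`: `none` is `✓`. -/
noncomputable def upd (n m : ℕ) (k : Option ℕ) : Option ℕ :=
  match k with
  | none => if rord m n then none else some (min n m)
  | some k =>
      if rord m n ∧ ((Odd n ∧ n ≤ k) ∨ (Even m ∧ m ≤ k)) then none
      else some (min n (min m k))

variable {V : Type u} (G : ParityGame V)

/-- The sequence of obligations along a play of the delayed simulation game. -/
noncomputable def oblSeq (p : ℕ → V × V) (k : Option ℕ) : ℕ → Option ℕ
  | 0 => k
  | n + 1 => upd (G.prio (p (n + 1)).1) (G.prio (p (n + 1)).2) (oblSeq p k n)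

/-- Duplicator has a winning strategy from `(v,w)` with obligation `k` in the
delayed simulation game: on every consistent play the obligation is `✓`
infinitely often. -/
def DupWinsDelayed (v w : V) (k : Option ℕ) : Prop :=
  ∃ τ : List (V × V) → V × V → V × V → V × V, G.DupValid τ ∧
    ∀ p : ℕ → V × V, p 0 = (v, w) → G.ConsistentDup τ p →
      ∀ N, ∃ n, N ≤ n ∧ G.oblSeq p k n = none

/-- `v ⊑_de w`: the game-based delayed simulation preorder. -/
def gameDe (v w : V) : Prop :=
  G.DupWinsDelayed v w (upd (G.prio v) (G.prio w) none)

/-- Well-founded delayed simulations. -/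
def IsWfDelaySim (R : V → Option ℕ → V → Prop) : Prop :=
  ∃ lt : V × V × Option ℕ → V × V × Option ℕ → Prop, WellFounded lt ∧
    ∀ v k w, R v k w →
      (G.owner v = true → ∀ v', G.edge v v' →
        G.stepEven w {w' |
          R v' (upd (G.prio v') (G.prio w') k) w' ∧
          (k = none ∨ lt (v', w', upd (G.prio v') (G.prio w') k) (v, w, k))}) ∧
      (G.owner v = false →
        G.stepEven w {w' | ∃ v', G.edge v v' ∧
          R v' (upd (G.prio v') (G.prio w') k) w' ∧
          (k = none ∨ lt (v', w', upd (G.prio v') (G.prio w') k) (v, w, k))})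

/-- `v ≤_de w`: the coinductive (well-founded) delayed simulation preorder. -/
def wfDe (v w : V) : Prop :=
  ∃ R, G.IsWfDelaySim R ∧ R v (upd (G.prio v) (G.prio w) none) w

end ParityGame
namespace ParityGame

variable {V : Type u} (G : ParityGame V)

/-- One round of the simulation game, in nested quantifier form. -/
def DStep (v w : V) (S : Set (V × V)) : Prop :=
  (G.owner v = true → ∀ v', G.edge v v' → G.stepEven w {w' | (v', w') ∈ S}) ∧
  (G.owner v = false → G.stepEven w {w' | ∃ v', G.edge v v' ∧ (v', w') ∈ S})

lemma stepEven_mono {w : V} {S T : Set V} (hST : S ⊆ T) (h : G.stepEven w S) :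
    G.stepEven w T := by
  unfold stepEven at *
  split at h <;> split <;> try simp_all
  · obtain ⟨w', hw', hmem⟩ := h; exact ⟨w', hw', hST hmem⟩
  · intro w' hw'; exact hST (h w' hw')

lemma DStep.mono {v w : V} {S T : Set (V × V)} (hST : S ⊆ T)
    (h : G.DStep v w S) : G.DStep v w T := by
  refine ⟨fun hv v' hv' => ?_, fun hv => ?_⟩
  · exact G.stepEven_mono (fun w' hw' => hST hw') (h.1 hv v' hv')
  · refine G.stepEven_mono ?_ (h.2 hv)
    rintro w' ⟨v', h1, h2⟩; exact ⟨v', h1, hST h2⟩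

lemma dstep_response {v w : V} {S : Set (V × V)} (h : G.DStep v w S)
    (s : V × V) (hs1 : G.owner v = true → G.edge v s.1)
    (hs2 : G.owner w = false → G.edge w s.2) :
    ∃ x' : V × V, G.edge v x'.1 ∧ G.edge w x'.2 ∧
      (G.owner v = true → x'.1 = s.1) ∧ (G.owner w = false → x'.2 = s.2) ∧
      x' ∈ S := by
  by_cases hv : G.owner v = true
  · have h1 := h.1 hv s.1 (hs1 hv)
    unfold stepEven at h1
    by_cases hw : G.owner w = true
    · rw [if_pos hw] at h1
      obtain ⟨w', hw', hmem⟩ := h1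
      exact ⟨(s.1, w'), hs1 hv, hw', fun _ => rfl, fun hwf => absurd hw (by simp [hwf]), hmem⟩
    · rw [if_neg hw] at h1
      have hwf : G.owner w = false := by simpa using hw
      exact ⟨(s.1, s.2), hs1 hv, hs2 hwf, fun _ => rfl, fun _ => rfl, h1 s.2 (hs2 hwf)⟩
  · have hvf : G.owner v = false := by simpa using hv
    have h2 := h.2 hvf
    unfold stepEven at h2
    by_cases hw : G.owner w = true
    · rw [if_pos hw] at h2
      obtain ⟨w', hw', v', hv', hmem⟩ := h2
      exact ⟨(v', w'), hv', hw', fun hvt => absurd hvt hv,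
        fun hwf => absurd hw (by simp [hwf]), hmem⟩
    · rw [if_neg hw] at h2
      have hwf : G.owner w = false := by simpa using hw
      obtain ⟨v', hv', hmem⟩ := h2 s.2 (hs2 hwf)
      exact ⟨(v', s.2), hv', hs2 hwf, fun hvt => absurd hvt hv, fun _ => rfl, hmem⟩

lemma not_dstep {v w : V} {S : Set (V × V)} (h : ¬ G.DStep v w S) :
    ∃ s : V × V, (G.owner v = true → G.edge v s.1) ∧
      (G.owner w = false → G.edge w s.2) ∧
      ∀ x' : V × V, G.edge v x'.1 → G.edge w x'.2 →
        (G.owner v = true → x'.1 = s.1) → (G.owner w = false → x'.2 = s.2) →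
        x' ∉ S := by
  classical
  by_cases hv : G.owner v = true
  · have hna : ¬ (∀ v', G.edge v v' → G.stepEven w {w' | (v', w') ∈ S}) := by
      intro hc; exact h ⟨fun _ => hc, fun hf => absurd hv (by simp [hf])⟩
    push_neg at hna
    obtain ⟨v', hv', hns⟩ := hna
    unfold stepEven at hns
    by_cases hw : G.owner w = true
    · rw [if_pos hw] at hns
      push_neg at hns
      refine ⟨(v', Classical.choose (G.total w)), fun _ => hv',
        fun hwf => absurd hw (by simp [hwf]), ?_⟩
      rintro ⟨a, b⟩ he1 he2 heq1 _ hmem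
      have ha : a = v' := heq1 hv
      subst ha
      exact hns b he2 hmem
    · rw [if_neg hw] at hns
      push_neg at hns
      obtain ⟨w', hw', hnm⟩ := hns
      refine ⟨(v', w'), fun _ => hv', fun _ => hw', ?_⟩
      rintro ⟨a, b⟩ he1 he2 heq1 heq2 hmem
      have ha : a = v' := heq1 hv
      have hb : b = w' := heq2 (by simpa using hw)
      subst ha; subst hb
      exact hnm hmem
  · have hvf : G.owner v = false := by simpa using hv
    have hnb : ¬ G.stepEven w {w' | ∃ v', G.edge v v' ∧ (v', w') ∈ S} := by
      intro hc; exact h ⟨fun ht => absurd ht hv, fun _ => hc⟩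
    unfold stepEven at hnb
    by_cases hw : G.owner w = true
    · rw [if_pos hw] at hnb
      push_neg at hnb
      refine ⟨(Classical.choose (G.total v), Classical.choose (G.total w)),
        fun ht => absurd ht hv, fun hwf => absurd hw (by simp [hwf]), ?_⟩
      rintro ⟨a, b⟩ he1 he2 _ _ hmem
      exact hnb b he2 ⟨a, he1, hmem⟩
    · rw [if_neg hw] at hnb
      push_neg at hnb
      obtain ⟨w', hw', hnm⟩ := hnb
      refine ⟨(Classical.choose (G.total v), w'), fun ht => absurd ht hv,
        fun _ => hw', ?_⟩
      rintro ⟨a, b⟩ he1 he2 _ heq2 hmem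
      have hb : b = w' := heq2 (by simpa using hw)
      subst hb
      exact hnm ⟨a, he1, hmem⟩

end ParityGame
namespace ParityGame

variable {V : Type u} (G : ParityGame V)

/-- `τ` wins the delayed game from `(v,w)` with obligation `k`. -/
def WinsVia (τ : List (V × V) → V × V → V × V → V × V) (v w : V) (k : Option ℕ) : Prop :=
  ∀ p : ℕ → V × V, p 0 = (v, w) → G.ConsistentDup τ p →
    ∀ N, ∃ n, N ≤ n ∧ G.oblSeq p k n = none

def histL (p : ℕ → V × V) (n : ℕ) : List (V × V) := List.ofFn fun i : Fin n => p i

lemma histL_zero (p : ℕ → V × V) : histL p 0 = [] := by simp [histL]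

lemma histL_succ (p : ℕ → V × V) (n : ℕ) :
    histL p (n + 1) = histL p n ++ [p n] := by
  simp only [histL, List.ofFn_succ', Fin.coe_castSucc, Fin.val_last,
    List.concat_eq_append]

lemma oblSeq_succ (p : ℕ → V × V) (k : Option ℕ) (n : ℕ) :
    G.oblSeq p k (n + 1)
      = upd (G.prio (p (n + 1)).1) (G.prio (p (n + 1)).2) (G.oblSeq p k n) := rfl

lemma winsVia_step {τ : List (V × V) → V × V → V × V → V × V}
    (hτ : G.DupValid τ) {x : V × V} {k : Option ℕ} (hwin : G.WinsVia τ x.1 x.2 k)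
    (s : V × V) (hs1 : G.owner x.1 = true → G.edge x.1 s.1)
    (hs2 : G.owner x.2 = false → G.edge x.2 s.2) :
    G.WinsVia (fun h z s' => τ (x :: h) z s') (τ [] x s).1
      (τ [] x s).2
      (upd (G.prio (τ [] x s).1) (G.prio (τ [] x s).2) k) := by
  intro q hq0 hqc N
  have hq0' : q 0 = τ [] x s := hq0
  set l : ℕ → V × V := fun m => match m with | 0 => x | Nat.succ m => q m with hl
  have hl0 : l 0 = (x.1, x.2) := rfl
  have hls : ∀ m, l (m + 1) = q m := fun m => rfl
  have hlc : G.ConsistentDup τ l := by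
    intro n
    match n with
    | 0 =>
      refine ⟨s, hs1, hs2, ?_⟩
      have h0 : (List.ofFn fun i : Fin 0 => l i) = ([] : List (V × V)) := by simp
      rw [h0, hls 0, hq0']
    | Nat.succ n =>
      obtain ⟨s', h1, h2, h3⟩ := hqc n
      refine ⟨s', by rwa [hls n], by rwa [hls n], ?_⟩
      have hlist : (List.ofFn fun i : Fin (n+1) => l i)
          = x :: List.ofFn (fun i : Fin n => q i) := by
        rw [List.ofFn_succ]
        congr 1
      rw [hls (n+1), hls n, hlist]
      exact h3
  have hobl : ∀ m, G.oblSeq l k (m + 1)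
      = G.oblSeq q (upd (G.prio (τ [] x s).1) (G.prio (τ [] x s).2) k) m := by
    intro m
    induction m with
    | zero =>
      show upd (G.prio (l 1).1) (G.prio (l 1).2) (G.oblSeq l k 0) = _
      rw [hls 0, hq0']
      rfl
    | succ m ih =>
      show upd (G.prio (l (m+2)).1) (G.prio (l (m+2)).2) (G.oblSeq l k (m+1)) = _
      rw [hls (m+1), ih]
      rfl
  obtain ⟨n, hn, hnone⟩ := hwin l hl0 hlc (N + 1)
  match n, hn with
  | Nat.succ m, hn =>
    exact ⟨m, by omega, by rw [← hobl m]; exact hnone⟩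

lemma dupValid_shift {τ : List (V × V) → V × V → V × V → V × V}
    (hτ : G.DupValid τ) (l : List (V × V)) :
    G.DupValid (fun h x s => τ (l ++ h) x s) := by
  intro h v w s hs1 hs2
  exact hτ (l ++ h) v w s hs1 hs2

lemma winsVia_shift {τ : List (V × V) → V × V → V × V → V × V}
    (hτ : G.DupValid τ) {v w : V} {k : Option ℕ} (hwin : G.WinsVia τ v w k)
    (p : ℕ → V × V) (hp0 : p 0 = (v, w)) (hpc : G.ConsistentDup τ p) (n : ℕ) :
    G.WinsVia (fun h x s => τ (histL p n ++ h) x s) (p n).1 (p n).2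
      (G.oblSeq p k n) := by
  induction n with
  | zero =>
    simp only [histL_zero, List.nil_append, hp0]
    exact hwin
  | succ n ih =>
    obtain ⟨s, hs1, hs2, hps⟩ := hpc n
    have hτn := G.dupValid_shift hτ (histL p n)
    have key := G.winsVia_step (x := p n) hτn ih s hs1 hs2
    have hpn : τ (histL p n ++ []) (p n) s = p (n + 1) := by
      rw [List.append_nil, hps]
      rfl
    rw [hpn] at key
    have hfun : (fun h z s' => τ (histL p n ++ p n :: h) z s')
        = (fun h z s' => τ (histL p (n + 1) ++ h) z s') := by
      funext h z s'
      rw [histL_succ, List.append_assoc, List.cons_append, List.nil_append]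
    rw [hfun] at key
    exact key

end ParityGame
namespace ParityGame

variable {V : Type u} (G : ParityGame V)

lemma no_descent {α : Sort*} {r : α → α → Prop} (wf : WellFounded r)
    (f : ℕ → α) (hf : ∀ n, r (f (n + 1)) (f n)) : False := by
  have H : ∀ a, Acc r a → ∀ n, f n = a → False := by
    intro a ha
    induction ha with
    | intro a _ ih =>
      intro n hn
      exact ih (f (n + 1)) (by rw [← hn]; exact hf n) (n + 1) rfl
  exact H (f 0) (wf.apply (f 0)) 0 rfl

/-- The obligation determined by the list of positions visited so far
(head = initial position), starting from the checkmark. -/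
noncomputable def oblOf : List (V × V) → Option ℕ
  | [] => none
  | x :: t => t.foldl (fun k y => upd (G.prio y.1) (G.prio y.2) k)
      (upd (G.prio x.1) (G.prio x.2) none)

lemma oblOf_append (x : V × V) (t : List (V × V)) (y : V × V) :
    G.oblOf ((x :: t) ++ [y]) = upd (G.prio y.1) (G.prio y.2) (G.oblOf (x :: t)) := by
  simp [oblOf, List.foldl_append]

lemma oblOf_hist (p : ℕ → V × V) (n : ℕ) :
    G.oblOf (histL p n ++ [p n])
      = G.oblSeq p (upd (G.prio (p 0).1) (G.prio (p 0).2) none) n := by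
  induction n with
  | zero => simp [histL_zero, oblOf, oblSeq]
  | succ n ih =>
    rw [histL_succ p n]
    rcases hl : histL p n ++ [p n] with _ | ⟨x, t⟩
    · exact absurd hl (by simp)
    · rw [G.oblOf_append x t, ← hl, ih, G.oblSeq_succ]

open Classical in
/-- Duplicator's strategy built from a one-round forcing property. -/
noncomputable def dupMove (T : V → V → Option ℕ → Set (V × V))
    (Q : V → Option ℕ → V → Prop)
    (hds : ∀ a k b, Q a k b → G.DStep a b (T a b k))
    (h : List (V × V)) (x : V × V) (s : V × V) : V × V :=
  if hc : Q x.1 (G.oblOf (h ++ [x])) x.2 ∧ (G.owner x.1 = true → G.edge x.1 s.1)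
      ∧ (G.owner x.2 = false → G.edge x.2 s.2) then
    Classical.choose
      (G.dstep_response (hds x.1 (G.oblOf (h ++ [x])) x.2 hc.1) s hc.2.1 hc.2.2)
  else
    (if G.owner x.1 = true then s.1 else Classical.choose (G.total x.1),
     if G.owner x.2 = false then s.2 else Classical.choose (G.total x.2))

lemma dupMove_valid (T : V → V → Option ℕ → Set (V × V))
    (Q : V → Option ℕ → V → Prop)
    (hds : ∀ a k b, Q a k b → G.DStep a b (T a b k)) :
    G.DupValid (G.dupMove T Q hds) := by
  intro h v w s hs1 hs2
  unfold dupMove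
  by_cases hc : Q (v, w).1 (G.oblOf (h ++ [(v, w)])) (v, w).2
      ∧ (G.owner (v, w).1 = true → G.edge (v, w).1 s.1)
      ∧ (G.owner (v, w).2 = false → G.edge (v, w).2 s.2)
  · rw [dif_pos hc]
    obtain ⟨h1, h2, h3, h4, _⟩ := Classical.choose_spec
      (G.dstep_response (hds (v, w).1 (G.oblOf (h ++ [(v, w)])) (v, w).2 hc.1)
        s hc.2.1 hc.2.2)
    exact ⟨h1, h2, h3, h4⟩
  · rw [dif_neg hc]
    refine ⟨?_, ?_, ?_, ?_⟩
    · by_cases hv : G.owner v = true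
      · simpa [hv] using hs1 hv
      · simp only [if_neg hv]
        exact Classical.choose_spec (G.total v)
    · by_cases hw : G.owner w = false
      · simpa [hw] using hs2 hw
      · simp only [if_neg hw]
        exact Classical.choose_spec (G.total w)
    · intro hv; simp [hv]
    · intro hw; simp [hw]

lemma dupMove_mem (T : V → V → Option ℕ → Set (V × V))
    (Q : V → Option ℕ → V → Prop)
    (hds : ∀ a k b, Q a k b → G.DStep a b (T a b k))
    {h : List (V × V)} {x : V × V} {s : V × V}
    (hQ : Q x.1 (G.oblOf (h ++ [x])) x.2)
    (hs1 : G.owner x.1 = true → G.edge x.1 s.1)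
    (hs2 : G.owner x.2 = false → G.edge x.2 s.2) :
    G.dupMove T Q hds h x s ∈ T x.1 x.2 (G.oblOf (h ++ [x])) := by
  unfold dupMove
  rw [dif_pos ⟨hQ, hs1, hs2⟩]
  exact (Classical.choose_spec
    (G.dstep_response (hds x.1 (G.oblOf (h ++ [x])) x.2 hQ) s hs1 hs2)).2.2.2.2

end ParityGame
namespace ParityGame

variable {V : Type u} (G : ParityGame V)

lemma wf_to_win {R : V → Option ℕ → V → Prop} (hR : G.IsWfDelaySim R)
    (v w : V) (hvw : R v (upd (G.prio v) (G.prio w) none) w) :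
    G.DupWinsDelayed v w (upd (G.prio v) (G.prio w) none) := by
  obtain ⟨lt, hwf, hsim⟩ := hR
  set T : V → V → Option ℕ → Set (V × V) := fun a b k =>
    {y | R y.1 (upd (G.prio y.1) (G.prio y.2) k) y.2 ∧
      (k = none ∨ lt (y.1, y.2, upd (G.prio y.1) (G.prio y.2) k) (a, b, k))}
    with hT
  have hds : ∀ a k b, R a k b → G.DStep a b (T a b k) := by
    intro a k b h
    exact ⟨(hsim a k b h).1, (hsim a k b h).2⟩
  refine ⟨G.dupMove T R hds, G.dupMove_valid T R hds, ?_⟩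
  intro p hp0 hpc
  set k0 := upd (G.prio v) (G.prio w) none with hk0
  have hobl : ∀ n, G.oblOf (histL p n ++ [p n]) = G.oblSeq p k0 n := by
    intro n; rw [G.oblOf_hist, hp0]
  have key : ∀ n, R (p n).1 (G.oblSeq p k0 n) (p n).2 →
      R (p (n+1)).1 (G.oblSeq p k0 (n+1)) (p (n+1)).2 ∧
      (G.oblSeq p k0 n = none ∨
        lt ((p (n+1)).1, (p (n+1)).2, G.oblSeq p k0 (n+1))
          ((p n).1, (p n).2, G.oblSeq p k0 n)) := by
    intro n hn
    obtain ⟨s, hs1, hs2, hps⟩ := hpc n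
    have hQ : R (p n).1
        (G.oblOf ((List.ofFn fun i : Fin n => p i) ++ [p n])) (p n).2 := by
      rw [show (List.ofFn fun i : Fin n => p (i : ℕ)) = histL p n from rfl,
        hobl n]
      exact hn
    have hmem := G.dupMove_mem T R hds hQ hs1 hs2
    rw [← hps,
      show (List.ofFn fun i : Fin n => p (i : ℕ)) = histL p n from rfl,
      hobl n] at hmem
    exact ⟨hmem.1, hmem.2⟩
  have hInv : ∀ n, R (p n).1 (G.oblSeq p k0 n) (p n).2 := by
    intro n
    induction n with
    | zero =>
      show R (p 0).1 k0 (p 0).2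
      rw [hp0]
      exact hvw
    | succ n ih => exact (key n ih).1
  intro N
  by_contra hno
  push_neg at hno
  refine no_descent hwf
    (fun j => ((p (N+j)).1, (p (N+j)).2, G.oblSeq p k0 (N+j))) ?_
  intro j
  rcases (key (N+j) (hInv (N+j))).2 with h | h
  · exact absurd h (hno (N+j) (by omega))
  · exact h

end ParityGame
namespace ParityGame

variable {V : Type u} (G : ParityGame V)

/-- Positions from which Duplicator can force the obligation to become `✓`
within `n` rounds while remaining in her winning region. -/
def WSet : ℕ → Set (V × V × Option ℕ)
  | 0 => {x | x.2.2 = none ∧ G.DupWinsDelayed x.1 x.2.1 x.2.2}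
  | n + 1 => WSet n ∪ {x | G.DupWinsDelayed x.1 x.2.1 x.2.2 ∧
      G.DStep x.1 x.2.1
        {y | (y.1, y.2, upd (G.prio y.1) (G.prio y.2) x.2.2) ∈ WSet n}}

lemma WSet_mono {m n : ℕ} (h : m ≤ n) : G.WSet m ⊆ G.WSet n := by
  induction h with
  | refl => exact subset_rfl
  | step h ih => exact ih.trans Set.subset_union_left

lemma WSet_wins {x : V × V × Option ℕ} {n : ℕ} (h : x ∈ G.WSet n) :
    G.DupWinsDelayed x.1 x.2.1 x.2.2 := by
  induction n with
  | zero => exact h.2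
  | succ n ih =>
    rcases h with h | h
    · exact ih h
    · exact h.1

lemma escape [Fintype V] {z : V × V} {kk : Option ℕ}
    (hwin : G.DupWinsDelayed z.1 z.2 kk)
    (hx : ∀ n, (z.1, z.2, kk) ∉ G.WSet n) :
    ∃ s : V × V, (G.owner z.1 = true → G.edge z.1 s.1) ∧
      (G.owner z.2 = false → G.edge z.2 s.2) ∧
      ∀ y : V × V, G.edge z.1 y.1 → G.edge z.2 y.2 →
        (G.owner z.1 = true → y.1 = s.1) →
        (G.owner z.2 = false → y.2 = s.2) →
        ∀ n, (y.1, y.2, upd (G.prio y.1) (G.prio y.2) kk) ∉ G.WSet n := by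
  classical
  set S : ℕ → Set (V × V) := fun n =>
    {y | (y.1, y.2, upd (G.prio y.1) (G.prio y.2) kk) ∈ G.WSet n} with hS
  have hSmono : ∀ {m n : ℕ}, m ≤ n → S m ⊆ S n :=
    fun h y hy => G.WSet_mono h hy
  have hnd : ∀ n, ¬ G.DStep z.1 z.2 (S n) := by
    intro n hd
    exact hx (n + 1) (Set.mem_union_right _ ⟨hwin, hd⟩)
  set N : ℕ := Finset.univ.sup (fun y : V × V =>
    if h : ∃ n, y ∈ S n then Nat.find h else 0) with hN
  have hsub : {y : V × V | ∃ n, y ∈ S n} ⊆ S N := by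
    intro y hy
    have hyex : ∃ n, y ∈ S n := hy
    have h1 : y ∈ S (Nat.find hyex) := Nat.find_spec hyex
    have h2 : (if h : ∃ n, y ∈ S n then Nat.find h else 0) ≤ N :=
      Finset.le_sup (f := fun y : V × V =>
        if h : ∃ n, y ∈ S n then Nat.find h else 0) (Finset.mem_univ y)
    rw [dif_pos hyex] at h2
    exact hSmono h2 h1
  have hnd' : ¬ G.DStep z.1 z.2 {y : V × V | ∃ n, y ∈ S n} := fun hd =>
    hnd N (hd.mono G hsub)
  obtain ⟨s, hs1, hs2, hres⟩ := G.not_dstep hnd'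
  exact ⟨s, hs1, hs2, fun y h1 h2 h3 h4 n hmem =>
    hres y h1 h2 h3 h4 ⟨n, hmem⟩⟩

end ParityGame
namespace ParityGame

variable {V : Type u} (G : ParityGame V)

/-- Invariant for the Spoiler escape construction. -/
def EscInv (τ : List (V × V) → V × V → V × V → V × V)
    (t : List (V × V) × (V × V) × Option ℕ) : Prop :=
  G.WinsVia (fun h' x s => τ (t.1 ++ h') x s) t.2.1.1 t.2.1.2 t.2.2 ∧
  ∀ n, (t.2.1.1, t.2.1.2, t.2.2) ∉ G.WSet n

open Classical in
/-- One step of the Spoiler escape construction. -/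
noncomputable def escStep [Fintype V]
    (τ : List (V × V) → V × V → V × V → V × V) (hτ : G.DupValid τ)
    (t : List (V × V) × (V × V) × Option ℕ) :
    List (V × V) × (V × V) × Option ℕ :=
  if hI : G.EscInv τ t then
    let s := Classical.choose
      (G.escape ⟨fun h' x s => τ (t.1 ++ h') x s,
        G.dupValid_shift hτ t.1, hI.1⟩ hI.2)
    let z' := τ (t.1 ++ []) t.2.1 s
    (t.1 ++ [t.2.1], z', upd (G.prio z'.1) (G.prio z'.2) t.2.2)
  else t

lemma escStep_spec [Fintype V]
    {τ : List (V × V) → V × V → V × V → V × V} (hτ : G.DupValid τ)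
    {t : List (V × V) × (V × V) × Option ℕ} (hI : G.EscInv τ t) :
    ∃ s : V × V,
      (G.owner t.2.1.1 = true → G.edge t.2.1.1 s.1) ∧
      (G.owner t.2.1.2 = false → G.edge t.2.1.2 s.2) ∧
      (G.escStep τ hτ t).1 = t.1 ++ [t.2.1] ∧
      (G.escStep τ hτ t).2.1 = τ t.1 t.2.1 s ∧
      (G.escStep τ hτ t).2.2
        = upd (G.prio (G.escStep τ hτ t).2.1.1)
            (G.prio (G.escStep τ hτ t).2.1.2) t.2.2 ∧
      G.EscInv τ (G.escStep τ hτ t) := by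
  have hesc := Classical.choose_spec
    (G.escape ⟨fun h' x s => τ (t.1 ++ h') x s,
      G.dupValid_shift hτ t.1, hI.1⟩ hI.2)
  set s := Classical.choose
    (G.escape ⟨fun h' x s => τ (t.1 ++ h') x s,
      G.dupValid_shift hτ t.1, hI.1⟩ hI.2) with hs
  obtain ⟨hs1, hs2, hres⟩ := hesc
  have hstep : G.escStep τ hτ t
      = (t.1 ++ [t.2.1], τ (t.1 ++ []) t.2.1 s,
          upd (G.prio (τ (t.1 ++ []) t.2.1 s).1)
            (G.prio (τ (t.1 ++ []) t.2.1 s).2) t.2.2) := by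
    rw [escStep, dif_pos hI]
  set z' := τ (t.1 ++ []) t.2.1 s with hz'
  have hval := G.dupValid_shift hτ t.1 [] t.2.1.1 t.2.1.2 s hs1 hs2
  refine ⟨s, hs1, hs2, by rw [hstep], ?_, by rw [hstep], ?_⟩
  · rw [hstep]
    show z' = _
    rw [hz', List.append_nil]
  rw [hstep]
  constructor
  · have key := G.winsVia_step (x := t.2.1) (G.dupValid_shift hτ t.1) hI.1 s hs1 hs2
    have hfun : (fun h z s' => τ (t.1 ++ t.2.1 :: h) z s')
        = fun h z s' => τ ((t.1 ++ [t.2.1]) ++ h) z s' := by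
      funext h z s'
      rw [List.append_assoc, List.cons_append, List.nil_append]
    rw [hfun] at key
    exact key
  · intro n
    exact hres z' hval.1 hval.2.1 hval.2.2.1 hval.2.2.2 n

lemma win_mem_WSet [Fintype V] {x : V × V × Option ℕ}
    (hwin : G.DupWinsDelayed x.1 x.2.1 x.2.2) : ∃ n, x ∈ G.WSet n := by
  by_contra hx
  push_neg at hx
  obtain ⟨τ, hτ, hwv⟩ := hwin
  set g : ℕ → List (V × V) × (V × V) × Option ℕ :=
    fun n => (G.escStep τ hτ)^[n] ([], (x.1, x.2.1), x.2.2) with hg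
  have hg0 : g 0 = ([], (x.1, x.2.1), x.2.2) := rfl
  have hgs : ∀ n, g (n + 1) = G.escStep τ hτ (g n) := fun n =>
    Function.iterate_succ_apply' _ _ _
  have hInv : ∀ n, G.EscInv τ (g n) := by
    intro n
    induction n with
    | zero =>
      constructor
      · exact fun p hp0 hpc => hwv p hp0 hpc
      · intro n hmem
        exact hx n hmem
    | succ n ih =>
      rw [hgs]
      exact (G.escStep_spec hτ ih).choose_spec.2.2.2.2.2
  set p : ℕ → V × V := fun n => (g n).2.1 with hp
  have hhist : ∀ n, (g n).1 = histL p n := by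
    intro n
    induction n with
    | zero => rw [hg0, histL_zero]
    | succ n ih =>
      obtain ⟨s, _, _, h3, _, _, _⟩ := G.escStep_spec hτ (hInv n)
      rw [hgs, h3, ih, histL_succ]
  have hobl : ∀ n, (g n).2.2 = G.oblSeq p x.2.2 n := by
    intro n
    induction n with
    | zero => rfl
    | succ n ih =>
      obtain ⟨s, _, _, _, _, h5, _⟩ := G.escStep_spec hτ (hInv n)
      have hpn : p (n + 1) = (G.escStep τ hτ (g n)).2.1 := by
        show (g (n + 1)).2.1 = _
        rw [hgs]
      rw [hgs, h5, ih, G.oblSeq_succ, hpn]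
  have hcons : G.ConsistentDup τ p := by
    intro n
    obtain ⟨s, h1, h2, _, h4, _, _⟩ := G.escStep_spec hτ (hInv n)
    refine ⟨s, h1, h2, ?_⟩
    show (g (n + 1)).2.1 = _
    rw [hgs, h4, hhist]
    rfl
  have hp0 : p 0 = (x.1, x.2.1) := rfl
  obtain ⟨n, _, hnone⟩ := hwv p hp0 hcons 0
  refine (hInv n).2 0 ⟨?_, ?_⟩
  · show (g n).2.2 = none
    rw [hobl n]
    exact hnone
  · exact ⟨fun h' z s => τ ((g n).1 ++ h') z s,
      G.dupValid_shift hτ (g n).1, (hInv n).1⟩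

end ParityGame
namespace ParityGame

variable {V : Type u} (G : ParityGame V)

open Classical in
/-- Rank of a position: least level of the `WSet` hierarchy containing it. -/
noncomputable def wrank (x : V × V × Option ℕ) : ℕ∞ :=
  if h : ∃ n, x ∈ G.WSet n then (Nat.find h : ℕ∞) else ⊤

lemma wrank_wf :
    WellFounded (fun a b : V × V × Option ℕ => G.wrank a < G.wrank b) :=
  InvImage.wf G.wrank (wellFounded_lt)

lemma wrank_le {x : V × V × Option ℕ} {n : ℕ} (h : x ∈ G.WSet n) :
    G.wrank x ≤ (n : ℕ∞) := by
  classical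
  rw [wrank, dif_pos ⟨n, h⟩]
  exact_mod_cast Nat.find_le h

lemma win_dstep {v w : V} {k : Option ℕ} (hwin : G.DupWinsDelayed v w k) :
    G.DStep v w
      {y : V × V | G.DupWinsDelayed y.1 y.2 (upd (G.prio y.1) (G.prio y.2) k)} := by
  obtain ⟨τ, hτ, hwv⟩ := hwin
  have key : ∀ s : V × V, (G.owner v = true → G.edge v s.1) →
      (G.owner w = false → G.edge w s.2) →
      G.edge v (τ [] (v, w) s).1 ∧ G.edge w (τ [] (v, w) s).2 ∧
      (G.owner v = true → (τ [] (v, w) s).1 = s.1) ∧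
      (G.owner w = false → (τ [] (v, w) s).2 = s.2) ∧
      G.DupWinsDelayed (τ [] (v, w) s).1 (τ [] (v, w) s).2
        (upd (G.prio (τ [] (v, w) s).1) (G.prio (τ [] (v, w) s).2) k) := by
    intro s hs1 hs2
    have hv := hτ [] v w s hs1 hs2
    have hw := G.winsVia_step (x := (v, w)) hτ hwv s hs1 hs2
    exact ⟨hv.1, hv.2.1, hv.2.2.1, hv.2.2.2,
      ⟨fun h z s' => τ ((v, w) :: h) z s',
        G.dupValid_shift hτ [(v, w)], hw⟩⟩
  constructor
  · intro hv v' hv'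
    unfold stepEven
    by_cases hw : G.owner w = true
    · rw [if_pos hw]
      obtain ⟨h1, h2, h3, _, h5⟩ := key (v', Classical.choose (G.total w))
        (fun _ => hv') (fun hwf => absurd hw (by simp [hwf]))
      rw [h3 hv] at h5
      exact ⟨(τ [] (v, w) (v', Classical.choose (G.total w))).2, h2, h5⟩
    · rw [if_neg hw]
      intro w' hw'
      have hwf : G.owner w = false := by simpa using hw
      obtain ⟨h1, h2, h3, h4, h5⟩ := key (v', w') (fun _ => hv') (fun _ => hw')
      rw [h3 hv, h4 hwf] at h5
      exact h5
  · intro hv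
    unfold stepEven
    by_cases hw : G.owner w = true
    · rw [if_pos hw]
      obtain ⟨h1, h2, h3, h4, h5⟩ := key (v, w)
        (fun ht => absurd ht (by simp [hv])) (fun hwf => absurd hw (by simp [hwf]))
      exact ⟨(τ [] (v, w) (v, w)).2, h2, (τ [] (v, w) (v, w)).1, h1, h5⟩
    · rw [if_neg hw]
      intro w' hw'
      have hwf : G.owner w = false := by simpa using hw
      obtain ⟨h1, h2, h3, h4, h5⟩ := key (v, w')
        (fun ht => absurd ht (by simp [hv])) (fun _ => hw')
      rw [h4 hwf] at h5
      exact ⟨(τ [] (v, w) (v, w')).1, h1, h5⟩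

lemma win_is_wfsim [Fintype V] :
    G.IsWfDelaySim (fun v k w => G.DupWinsDelayed v w k) := by
  classical
  refine ⟨fun a b => G.wrank a < G.wrank b, G.wrank_wf, ?_⟩
  intro v k w hwin
  suffices hd : G.DStep v w
      {y : V × V | G.DupWinsDelayed y.1 y.2 (upd (G.prio y.1) (G.prio y.2) k) ∧
        (k = none ∨ G.wrank (y.1, y.2, upd (G.prio y.1) (G.prio y.2) k)
          < G.wrank (v, w, k))} by
    exact ⟨hd.1, hd.2⟩
  rcases k with _ | m
  · refine (G.win_dstep hwin).mono G ?_
    intro y hy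
    exact ⟨hy, Or.inl rfl⟩
  · have hfind : ∃ n, ((v, w, some m) : V × V × Option ℕ) ∈ G.WSet n :=
      G.win_mem_WSet (x := (v, w, some m)) hwin
    rcases hn0 : Nat.find hfind with _ | m0
    · exfalso
      have := Nat.find_spec hfind
      rw [hn0] at this
      exact Option.some_ne_none m this.1
    · have hspec := Nat.find_spec hfind
      rw [hn0] at hspec
      rcases hspec with hsp | hsp
      · exact absurd hsp (Nat.find_min hfind (by omega))
      · refine (hsp.2.mono G ?_)
        intro y hy
        refine ⟨G.WSet_wins hy, Or.inr ?_⟩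
        calc G.wrank (y.1, y.2, upd (G.prio y.1) (G.prio y.2) (some m))
            ≤ (m0 : ℕ∞) := G.wrank_le hy
          _ < ((m0 + 1 : ℕ) : ℕ∞) := by exact_mod_cast Nat.lt_succ_self m0
          _ = G.wrank (v, w, some m) := by
              rw [wrank, dif_pos hfind, hn0]
  
end ParityGame

/-- Well-founded delayed simulation and the delayed simulation game coincide:
(1) a well-founded delayed simulation witnessing `v R[γ(v,w,✓)] w` yields a
Duplicator winning strategy from `(v,w)` with obligation `γ(v,w,✓)`;
(2) Duplicator's winning region is a well-founded delayed simulation;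
(3) hence `v ⊑_de w ↔ v ≤_de w`. -/
theorem delayed_sim_game_iff_wf {V : Type u} [Fintype V] (G : ParityGame V) :
    (∀ R : V → Option ℕ → V → Prop, G.IsWfDelaySim R →
      ∀ v w, R v (ParityGame.upd (G.prio v) (G.prio w) none) w →
        G.DupWinsDelayed v w (ParityGame.upd (G.prio v) (G.prio w) none)) ∧
    G.IsWfDelaySim (fun v k w => G.DupWinsDelayed v w k) ∧
    (∀ v w, G.gameDe v w ↔ G.wfDe v w) := by
  refine ⟨fun R hR v w hvw => G.wf_to_win hR v w hvw, G.win_is_wfsim, fun v w => ⟨?_, ?_⟩⟩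
  · intro h
    exact ⟨fun v k w => G.DupWinsDelayed v w k, G.win_is_wfsim, h⟩
  · rintro ⟨R, hR, hr⟩
    exact G.wf_to_win hR v w hr
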